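/- Define δ_r = 1 − (4(r+1) / (r(r+2)π)) · cot(π / (2(r+1))) for integers r ≥ 1. Then δ₁ = 1 − 8/(3π), and for every integer r ≥ 1 one has 0.15 < 1 − 8/(3π) ≤ δ_r < 1 − 8/π² < 0.19. -/

import Mathlib

noncomputable section

/-- The Sato–Tate exponent `δ_r = 1 - (4(r+1)/(r(r+2)π)) cot(π/(2(r+1)))`. -/
def deltaST (r : ℕ) : ℝ :=
  1 - (4 * ((r : ℝ) + 1) / ((r : ℝ) * ((r : ℝ) + 2) * Real.pi)) *
    Real.cot (Real.pi / (2 * ((r : ℝ) + 1)))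

/-!
Put `x = π / (2(r+1))`. Since `r(r+2) = (r+1)² - 1`, one has
`δ_r = 1 - 8 x cot x / (π² - 4x²)`, so the two bounds on `δ_r` are the two trigonometric
inequalities `3π x cos x ≤ (π² - 4x²) sin x < π² x cos x`, the first for `x ≤ π/6`
(that is `r ≥ 2`; at `r = 1` it is an equality) and the second for `x ≤ π/4`.
Both follow from the Taylor bounds for `sin` and `cos` at order three or five.
-/

open Real

theorem pi_sq_sub_mul_sin_lt {x : ℝ} (hx0 : 0 < x) (hx : x ≤ π / 4) :
    (π ^ 2 - 4 * x ^ 2) * sin x < π ^ 2 * x * cos x := by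
  have hπ := pi_gt_d2
  have hπ' := pi_lt_d2
  have hx2 : x ^ 2 ≤ 0.63 := by nlinarith
  have hsin : sin x ≤ x - x ^ 3 / 6 + x ^ 5 / 100 := by
    have := sin_bound (x := x) (by rw [abs_of_pos hx0]; linarith)
    rw [abs_of_pos hx0] at this
    linarith [(abs_le.1 this).2]
  have hcos : 1 - x ^ 2 / 2 ≤ cos x := one_sub_sq_div_two_le_cos
  have hcoef : 0 < π ^ 2 - 4 * x ^ 2 := by nlinarith
  have hpoly :
      (π ^ 2 - 4 * x ^ 2) * (x - x ^ 3 / 6 + x ^ 5 / 100) < π ^ 2 * x * (1 - x ^ 2 / 2) := by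
    -- the difference of the two sides is `x³ (4 - π²/3) - x⁵ (π²/100 + 2/3) + x⁷/25`
    have hlead : 0 < x ^ 3 * ((4 - π ^ 2 / 3) - x ^ 2 * (π ^ 2 / 100 + 2 / 3)) :=
      mul_pos (pow_pos hx0 3) (by nlinarith)
    nlinarith [pow_pos hx0 7]
  nlinarith [mul_le_mul_of_nonneg_left hsin hcoef.le,
    mul_le_mul_of_nonneg_left hcos (by positivity : 0 ≤ π ^ 2 * x)]

theorem three_pi_mul_cos_le_pi_sq_sub_mul_sin {x : ℝ} (hx0 : 0 < x) (hx : x ≤ π / 6) :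
    3 * π * x * cos x ≤ (π ^ 2 - 4 * x ^ 2) * sin x := by
  have hπ := pi_gt_d2
  have hπ' := pi_lt_d2
  have hx2 : x ^ 2 ≤ 0.28 := by nlinarith
  have hcos : cos x ≤ 1 - x ^ 2 / 2 + x ^ 4 * (5 / 96) := by
    have := cos_bound (x := x) (by rw [abs_of_pos hx0]; linarith)
    rw [abs_of_pos hx0] at this
    linarith [(abs_le.1 this).2]
  have hsin : x - x ^ 3 / 6 ≤ sin x := sin_ge_sub_cube hx0.le
  have hcoef : 0 < π ^ 2 - 4 * x ^ 2 := by nlinarith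
  have hpoly : 3 * π * x * (1 - x ^ 2 / 2 + x ^ 4 * (5 / 96))
      ≤ (π ^ 2 - 4 * x ^ 2) * (x - x ^ 3 / 6) := by
    have hdiff_div_x : 0 ≤ (π ^ 2 - 4 * x ^ 2) * (1 - x ^ 2 / 6)
        - 3 * π * (1 - x ^ 2 / 2 + x ^ 4 * (5 / 96)) := by
      nlinarith [mul_nonneg (pow_nonneg hx0.le 4) (by linarith : (0:ℝ) ≤ 2 / 3 - 15 * π / 96),
        mul_nonneg (sq_nonneg x) (by linarith : (0:ℝ) ≤ π - 3.14),
        mul_nonneg (sq_nonneg x) (by linarith : (0:ℝ) ≤ 3.15 - π)]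
    nlinarith [mul_nonneg hx0.le hdiff_div_x]
  nlinarith [mul_le_mul_of_nonneg_left hsin hcoef.le,
    mul_le_mul_of_nonneg_left hcos (by positivity : 0 ≤ 3 * π * x)]

theorem deltaST_eq {r : ℕ} {x : ℝ} (hx : x = π / (2 * (r + 1))) :
    deltaST r = 1 - 8 * x * cos x / ((π ^ 2 - 4 * x ^ 2) * sin x) := by
  subst hx
  have hr : (r : ℝ) + 1 ≠ 0 := by positivity
  have hcoef : π ^ 2 - 4 * (π / (2 * (r + 1))) ^ 2 = π ^ 2 * r * (r + 2) / (r + 1) ^ 2 := by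
    field_simp
    ring
  rw [deltaST, cot_eq_cos_div_sin, hcoef]
  field_simp
  ring

theorem deltaST_lt_one_sub_eight_div_pi_sq {r : ℕ} (hr : 1 ≤ r) :
    deltaST r < 1 - 8 / π ^ 2 := by
  set x := π / (2 * (r + 1)) with hx
  have hr' : (1 : ℝ) ≤ r := by exact_mod_cast hr
  have hx0 : 0 < x := by positivity
  have hx1 : x ≤ π / 4 := div_le_div_of_nonneg_left pi_pos.le (by norm_num) (by linarith)
  have hsin : 0 < sin x := sin_pos_of_pos_of_lt_pi hx0 (by linarith [pi_pos])
  have hcoef : 0 < π ^ 2 - 4 * x ^ 2 := by nlinarith [pi_pos]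
  rw [deltaST_eq hx, sub_lt_sub_iff_left, div_lt_div_iff₀ (by positivity) (by positivity)]
  nlinarith [pi_sq_sub_mul_sin_lt hx0 hx1]

theorem one_sub_eight_div_three_pi_le_deltaST {r : ℕ} (hr : 2 ≤ r) :
    1 - 8 / (3 * π) ≤ deltaST r := by
  set x := π / (2 * (r + 1)) with hx
  have hr' : (2 : ℝ) ≤ r := by exact_mod_cast hr
  have hx0 : 0 < x := by positivity
  have hx1 : x ≤ π / 6 := div_le_div_of_nonneg_left pi_pos.le (by norm_num) (by linarith)
  have hsin : 0 < sin x := sin_pos_of_pos_of_lt_pi hx0 (by linarith [pi_pos])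
  have hcoef : 0 < π ^ 2 - 4 * x ^ 2 := by nlinarith [pi_pos]
  rw [deltaST_eq hx, sub_le_sub_iff_left, div_le_div_iff₀ (by positivity) (by positivity)]
  nlinarith [three_pi_mul_cos_le_pi_sq_sub_mul_sin hx0 hx1]

theorem deltaST_one : deltaST 1 = 1 - 8 / (3 * π) := by
  have hcot : cot (π / 4) = 1 := by
    rw [cot_eq_cos_div_sin, cos_pi_div_four, sin_pi_div_four, div_self (by positivity)]
  rw [deltaST, Nat.cast_one, show π / (2 * (1 + 1)) = π / 4 by ring, hcot]
  field_simp
  ring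

/-- `δ₁ = 1 - 8/(3π)`, and `0.15 < 1 - 8/(3π) ≤ δ_r < 1 - 8/π² < 0.19`
for every `r ≥ 1`. -/
theorem deltaST_bounds :
    deltaST 1 = 1 - 8 / (3 * Real.pi) ∧
    (0.15 : ℝ) < 1 - 8 / (3 * Real.pi) ∧
    (∀ r : ℕ, 1 ≤ r →
      1 - 8 / (3 * Real.pi) ≤ deltaST r ∧ deltaST r < 1 - 8 / Real.pi ^ 2) ∧
    1 - 8 / Real.pi ^ 2 < (0.19 : ℝ) := by
  refine ⟨deltaST_one, ?_, fun r hr => ⟨?_, deltaST_lt_one_sub_eight_div_pi_sq hr⟩, ?_⟩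
  · have : 8 / (3 * π) < 0.85 := by
      rw [div_lt_iff₀ (by positivity)]
      linarith [pi_gt_d2]
    linarith
  · rcases hr.eq_or_lt with rfl | hr
    · exact deltaST_one.ge
    · exact one_sub_eight_div_three_pi_le_deltaST hr
  · have : 0.81 < 8 / π ^ 2 := by
      rw [lt_div_iff₀ (by positivity)]
      nlinarith [pi_lt_d4, pi_pos]
    linarith
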